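/- arXiv:1509.06308 — 3 statements merged into one kernel-verified Lean document; each statement's English description precedes it below -/
import Mathlib

section
/- For every real z > 0 and all real numbers a and b, one has 2·∫_0^∞ K_{a+b}(2z·cosh t)·cosh((a−b)t) dt = K_a(z)·K_b(z). -/
open Real MeasureTheory

/-- The modified Bessel function of the second kind, for `z > 0` and real order `ν`,
given by `K_ν(z) = ∫_0^∞ exp(−z cosh t) cosh(ν t) dt`. -/
noncomputable def besselK (ν z : ℝ) : ℝ :=
  ∫ t in Set.Ioi (0 : ℝ), Real.exp (-z * Real.cosh t) * Real.cosh (ν * t)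

/-!
By evenness, `2 K_ν(z) = ∫_ℝ exp (ν t - z cosh t) dt`, so `4 K_a(z) K_b(z)` is a double
integral over `(u, v)`. The substitution `u = s + t`, `v = s - t` (Jacobian `2`) turns
`a u + b v - z (cosh u + cosh v)` into `(a - b) t + (a + b) s - 2 z cosh t cosh s`, whose
`s`-integral is `2 exp ((a - b) t) K_{a+b}(2 z cosh t)`; folding the `t`-integral onto `t > 0`
produces `cosh ((a - b) t)`. The `s`-integral is a convolution evaluated at `2 t`, so the
change of order of integration is the formula for the integral of a convolution.
-/

open Set
open scoped Convolution

theorem integral_eq_setIntegral_Ioi_add_comp_neg {E : Type*} [NormedAddCommGroup E]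
    [NormedSpace ℝ E] {F : ℝ → E} (hF : Integrable F) :
    ∫ t, F t = ∫ t in Ioi 0, (F t + F (-t)) := by
  rw [integral_add hF.integrableOn hF.comp_neg.integrableOn, integral_comp_neg_Ioi, neg_zero,
    ← intervalIntegral.integral_Iic_add_Ioi hF.integrableOn hF.integrableOn, add_comm]

section Convolution

variable {f g : ℝ → ℝ}

theorem integral_mul_comp_add_mul_comp_sub_eq_convolution (t : ℝ) :
    ∫ s, f (s + t) * g (s - t)
      = (f ⋆[ContinuousLinearMap.mul ℝ ℝ] fun x => g (-x)) (2 * t) := by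
  rw [convolution_def]
  conv_rhs => rw [← integral_add_right_eq_self _ t]
  congr 1 with s
  simp only [ContinuousLinearMap.mul_apply', neg_sub]
  congr 2
  ring

theorem integrable_integral_mul_comp_add_mul_comp_sub (hf : Integrable f) (hg : Integrable g) :
    Integrable fun t => ∫ s, f (s + t) * g (s - t) := by
  simp_rw [integral_mul_comp_add_mul_comp_sub_eq_convolution]
  exact (hf.integrable_convolution _ hg.comp_neg).comp_mul_left' two_ne_zero

theorem integral_integral_mul_comp_add_mul_comp_sub (hf : Integrable f) (hg : Integrable g) :
    ∫ t, ∫ s, f (s + t) * g (s - t) = 2⁻¹ * ((∫ u, f u) * ∫ v, g v) := by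
  simp_rw [integral_mul_comp_add_mul_comp_sub_eq_convolution]
  rw [Measure.integral_comp_mul_left (f ⋆[_] _) 2, integral_convolution _ hf hg.comp_neg,
    integral_neg_eq_self]
  simp

end Convolution

noncomputable def besselKIntegrand (ν z t : ℝ) : ℝ := exp (ν * t - z * cosh t)

theorem besselKIntegrand_le {z : ℝ} (hz : 0 < z) (ν t : ℝ) :
    besselKIntegrand ν z t ≤ exp (2 * ν ^ 2 / z) * exp (-(z / 8) * t ^ 2) := by
  rw [besselKIntegrand, ← exp_add, exp_le_exp]
  have hcosh : t ^ 2 / 4 ≤ cosh t := by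
    have := quadratic_le_exp_of_nonneg (abs_nonneg t)
    rw [← cosh_abs, cosh_eq]
    nlinarith [sq_abs t, abs_nonneg t, exp_pos (-|t|)]
  have hsq : (z * t - 4 * ν) ^ 2 / (8 * z) = z * t ^ 2 / 8 - ν * t + 2 * ν ^ 2 / z := by
    field_simp
    ring
  nlinarith [div_nonneg (sq_nonneg (z * t - 4 * ν)) (by positivity : (0 : ℝ) ≤ 8 * z)]

theorem integrable_besselKIntegrand {z : ℝ} (hz : 0 < z) (ν : ℝ) :
    Integrable (besselKIntegrand ν z) := by
  have hgauss := (integrable_exp_neg_mul_sq (by positivity : 0 < z / 8)).const_mul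
    (exp (2 * ν ^ 2 / z))
  refine hgauss.mono' (by unfold besselKIntegrand; fun_prop) (.of_forall fun t => ?_)
  exact (Real.norm_of_nonneg (exp_pos _).le).trans_le (besselKIntegrand_le hz ν t)

theorem integral_besselKIntegrand {z : ℝ} (hz : 0 < z) (ν : ℝ) :
    ∫ t, besselKIntegrand ν z t = 2 * besselK ν z := by
  rw [integral_eq_setIntegral_Ioi_add_comp_neg (integrable_besselKIntegrand hz ν), besselK,
    ← integral_const_mul]
  congr 1 with t
  simp only [besselKIntegrand, cosh_neg, mul_neg, cosh_eq (ν * t), sub_eq_add_neg, exp_add,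
    neg_mul]
  ring

theorem besselKIntegrand_add_mul_sub (a b z s t : ℝ) :
    besselKIntegrand a z (s + t) * besselKIntegrand b z (s - t)
      = exp ((a - b) * t) * besselKIntegrand (a + b) (2 * z * cosh t) s := by
  simp only [besselKIntegrand, ← exp_add, cosh_add, cosh_sub]
  ring_nf

theorem besselK_product (z : ℝ) (hz : 0 < z) (a b : ℝ) :
    2 * ∫ t in Set.Ioi (0 : ℝ), besselK (a + b) (2 * z * Real.cosh t) * Real.cosh ((a - b) * t)
      = besselK a z * besselK b z := by
  have hf := integrable_besselKIntegrand hz a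
  have hg := integrable_besselKIntegrand hz b
  have hinner (t : ℝ) : ∫ s, besselKIntegrand a z (s + t) * besselKIntegrand b z (s - t)
      = exp ((a - b) * t) * (2 * besselK (a + b) (2 * z * cosh t)) := by
    simp_rw [besselKIntegrand_add_mul_sub]
    rw [integral_const_mul, integral_besselKIntegrand (by positivity)]
  have key := integral_integral_mul_comp_add_mul_comp_sub hf hg
  rw [integral_eq_setIntegral_Ioi_add_comp_neg
    (integrable_integral_mul_comp_add_mul_comp_sub hf hg)] at key
  simp_rw [hinner, integral_besselKIntegrand hz, cosh_neg] at key
  have hsym (t : ℝ) : exp ((a - b) * t) * (2 * besselK (a + b) (2 * z * cosh t))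
      + exp ((a - b) * -t) * (2 * besselK (a + b) (2 * z * cosh t))
      = 4 * (besselK (a + b) (2 * z * cosh t) * cosh ((a - b) * t)) := by
    rw [cosh_eq ((a - b) * t), mul_neg]
    ring
  simp_rw [hsym, integral_const_mul] at key
  linarith
end

section
/- Let q : (0,∞) → ℝ, let λ, μ > 0, and let b > 0 be such that x ↦ e^{−zx}·q(x) is integrable on (0,∞) for every z ≥ b. Suppose q has the asymptotic expansion with coefficients (a_n): for every M ∈ ℕ, q(x) − Σ_{n=0}^{M−1} a_n·x^{(n+λ−μ)/μ} = O(x^{(M+λ−μ)/μ}) as x → 0⁺. Then for every M ∈ ℕ, ∫_0^∞ e^{−zx}·q(x) dx − Σ_{n=0}^{M−1} Γ((n+λ)/μ)·a_n·z^{−(n+λ)/μ} = O(z^{−(M+λ)/μ}) as z → ∞. -/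
/-!
Watson's lemma. Subtracting the first `M` terms of the expansion leaves a remainder
`r = O(x ^ (s - 1))` at `0⁺`, with `s = (M + λ) / μ`, while each subtracted term `x ^ (t - 1)` has
Laplace transform `Γ(t) z ^ (-t)`. On `(0, δ)` the remainder is dominated by `C x ^ (s - 1)`, whose
transform is `C Γ(s) z ^ (-s)`; on `[δ, ∞)` the factor `e^{-(z - c) x} ≤ e^{-(z - c) δ}` makes the
contribution exponentially small.
-/

open Real MeasureTheory Filter Asymptotics Topology Finset

lemma integrableOn_exp_neg_mul_mul_rpow_sub_one {s z : ℝ} (hs : 0 < s) (hz : 0 < z) :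
    IntegrableOn (fun x : ℝ => exp (-z * x) * x ^ (s - 1)) (Set.Ioi 0) :=
  (integrableOn_rpow_mul_exp_neg_mul_rpow (s := s - 1) (by linarith) one_pos hz).congr_fun
    (fun x _ => by dsimp only; rw [rpow_one, mul_comm]) measurableSet_Ioi

lemma integral_exp_neg_mul_mul_rpow_sub_one {s z : ℝ} (hs : 0 < s) (hz : 0 < z) :
    ∫ x in Set.Ioi (0 : ℝ), exp (-z * x) * x ^ (s - 1) = Gamma s * z ^ (-s) := by
  have hGamma := integral_rpow_mul_exp_neg_mul_Ioi hs hz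
  rw [one_div, inv_rpow hz.le, ← rpow_neg hz.le] at hGamma
  rw [mul_comm (Gamma s), ← hGamma]
  refine setIntegral_congr_fun measurableSet_Ioi fun x _ => ?_
  rw [neg_mul, mul_comm]

section FiniteSum

variable {ι : Type*} (t : Finset ι) (a s : ι → ℝ) {z : ℝ}

lemma integrableOn_exp_neg_mul_mul_sum_rpow (hs : ∀ n ∈ t, 0 < s n) (hz : 0 < z) :
    IntegrableOn (fun x => exp (-z * x) * ∑ n ∈ t, a n * x ^ (s n - 1)) (Set.Ioi 0) := by
  simp only [Finset.mul_sum, mul_left_comm (exp _)]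
  exact integrable_finsetSum _ fun n hn =>
    (integrableOn_exp_neg_mul_mul_rpow_sub_one (hs n hn) hz).const_mul (a n)

lemma integral_exp_neg_mul_mul_sum_rpow (hs : ∀ n ∈ t, 0 < s n) (hz : 0 < z) :
    ∫ x in Set.Ioi (0 : ℝ), exp (-z * x) * ∑ n ∈ t, a n * x ^ (s n - 1) =
      ∑ n ∈ t, Gamma (s n) * a n * z ^ (-s n) := by
  simp only [Finset.mul_sum, mul_left_comm (exp _)]
  rw [integral_finsetSum _ fun n hn =>
    (integrableOn_exp_neg_mul_mul_rpow_sub_one (hs n hn) hz).const_mul (a n)]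
  refine Finset.sum_congr rfl fun n hn => ?_
  rw [integral_const_mul, integral_exp_neg_mul_mul_rpow_sub_one (hs n hn) hz]
  ring

end FiniteSum

lemma norm_exp_neg_mul_mul_le {r : ℝ → ℝ} {c s C δ z x : ℝ} (hC : 0 ≤ C) (hcz : c ≤ z)
    (hnear : ∀ y ∈ Set.Ioo 0 δ, ‖r y‖ ≤ C * y ^ (s - 1)) (hx : 0 < x) :
    ‖exp (-z * x) * r x‖ ≤
      C * (exp (-z * x) * x ^ (s - 1)) + exp (-(z - c) * δ) * ‖exp (-c * x) * r x‖ := by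
  rw [norm_mul, norm_mul, norm_of_nonneg (exp_pos _).le, norm_of_nonneg (exp_pos _).le]
  rcases lt_or_ge x δ with hxδ | hδx
  · have hnear_x := mul_le_mul_of_nonneg_left (hnear x ⟨hx, hxδ⟩) (exp_pos (-z * x)).le
    have : 0 ≤ exp (-(z - c) * δ) * (exp (-c * x) * ‖r x‖) := by positivity
    linarith
  · have hdecay : exp (-z * x) ≤ exp (-(z - c) * δ) * exp (-c * x) := by
      rw [← exp_add, exp_le_exp]
      nlinarith
    have : 0 ≤ C * (exp (-z * x) * x ^ (s - 1)) := by positivity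
    nlinarith [norm_nonneg (r x)]

theorem isBigO_laplace_of_isBigO_rpow {r : ℝ → ℝ} {c s : ℝ} (hs : 0 < s)
    (hint : IntegrableOn (fun x => exp (-c * x) * r x) (Set.Ioi 0))
    (hr : r =O[𝓝[>] 0] fun x => x ^ (s - 1)) :
    (fun z => ∫ x in Set.Ioi (0 : ℝ), exp (-z * x) * r x) =O[atTop] fun z => z ^ (-s) := by
  obtain ⟨C, hC, hCr⟩ := hr.exists_nonneg
  obtain ⟨δ, hδ, hnear⟩ := mem_nhdsGT_iff_exists_Ioo_subset.1 hCr.bound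
  replace hnear : ∀ y ∈ Set.Ioo 0 δ, ‖r y‖ ≤ C * y ^ (s - 1) := fun y hy => by
    have hy_bound : ‖r y‖ ≤ C * ‖y ^ (s - 1)‖ := hnear hy
    rwa [norm_of_nonneg (rpow_pos_of_pos hy.1 _).le] at hy_bound
  set K := ∫ x in Set.Ioi (0 : ℝ), ‖exp (-c * x) * r x‖
  have hbound : ∀ z, c ≤ z → 0 < z → ‖∫ x in Set.Ioi (0 : ℝ), exp (-z * x) * r x‖ ≤
      C * Gamma s * z ^ (-s) + exp (c * δ) * K * exp (-δ * z) := by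
    intro z hcz hz
    have hnear_int := (integrableOn_exp_neg_mul_mul_rpow_sub_one hs hz).const_mul C
    have hfar_int := hint.norm.const_mul (exp (-(z - c) * δ))
    refine (norm_integral_le_of_norm_le (hnear_int.add hfar_int) ?_).trans_eq ?_
    · exact (ae_restrict_iff' measurableSet_Ioi).2 <| ae_of_all _ fun x hx =>
        norm_exp_neg_mul_mul_le hC hcz hnear hx
    · rw [integral_add' hnear_int hfar_int, integral_const_mul, integral_const_mul,
        integral_exp_neg_mul_mul_rpow_sub_one hs hz,
        show -(z - c) * δ = c * δ + -δ * z by ring, exp_add]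
      ring
  have hmajorant_isBigO : (fun z => C * Gamma s * z ^ (-s) + exp (c * δ) * K * exp (-δ * z))
      =O[atTop] fun z => z ^ (-s) :=
    ((isBigO_refl _ _).const_mul_left _).add
      ((isLittleO_exp_neg_mul_rpow_atTop hδ _).isBigO.const_mul_left _)
  refine IsBigO.trans (IsBigO.of_bound' ?_) hmajorant_isBigO
  filter_upwards [eventually_ge_atTop c, eventually_gt_atTop 0] with z hcz hz
  exact (hbound z hcz hz).trans (le_norm_self _)

theorem laplace_method
    (q : ℝ → ℝ) (lam mu b : ℝ) (hlam : 0 < lam) (hmu : 0 < mu) (hb : 0 < b)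
    (a : ℕ → ℝ)
    (hint : ∀ z : ℝ, b ≤ z →
      IntegrableOn (fun x => Real.exp (-z * x) * q x) (Set.Ioi 0))
    (hasymp : ∀ M : ℕ,
      (fun x : ℝ => q x - ∑ n ∈ Finset.range M, a n * x ^ (((n : ℝ) + lam - mu) / mu))
        =O[𝓝[>] 0] fun x : ℝ => x ^ (((M : ℝ) + lam - mu) / mu)) :
    ∀ M : ℕ,
      (fun z : ℝ => (∫ x in Set.Ioi (0 : ℝ), Real.exp (-z * x) * q x) -
          ∑ n ∈ Finset.range M,
            Real.Gamma (((n : ℝ) + lam) / mu) * a n * z ^ (-(((n : ℝ) + lam) / mu)))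
        =O[atTop] fun z : ℝ => z ^ (-(((M : ℝ) + lam) / mu)) := by
  intro M
  have hexp (t : ℝ) : (t + lam - mu) / mu = (t + lam) / mu - 1 := by field_simp
  have hs : ∀ n ∈ range M, 0 < ((n : ℝ) + lam) / mu := fun n _ => by positivity
  have hsum_int {z : ℝ} (hz : 0 < z) := integrableOn_exp_neg_mul_mul_sum_rpow (range M) a
    (fun n : ℕ => ((n : ℝ) + lam) / mu) hs hz
  have hrem_int : IntegrableOn (fun x => exp (-b * x) *
      (q x - ∑ n ∈ range M, a n * x ^ (((n : ℝ) + lam) / mu - 1))) (Set.Ioi 0) :=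
    ((hint b le_rfl).sub (hsum_int hb)).congr_fun (fun x _ => (mul_sub _ _ _).symm)
      measurableSet_Ioi
  refine (isBigO_laplace_of_isBigO_rpow (by positivity) hrem_int
    (by simpa only [hexp] using hasymp M)).congr' ?_ EventuallyEq.rfl
  filter_upwards [eventually_ge_atTop b] with z hz
  simp only [mul_sub]
  rw [integral_sub (hint z hz) (hsum_int (hb.trans_le hz)),
    integral_exp_neg_mul_mul_sum_rpow _ _ _ hs (hb.trans_le hz)]
end

section
/- For every N ∈ ℕ, ν ∈ ℝ and every real z > 0, F_{ν+1}^{N+1}(z) = (ν/z)·F_ν^N(z) − (d/dz)F_ν^N(z), where the derivative is taken with respect to z on (0,∞). -/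
/-!
Write `K_ν(y) = ∫₀^∞ e^{-y cosh s} cosh(νs) ds`. Differentiating under the integral sign gives
`K_ν' = -∫₀^∞ e^{-y cosh s} cosh s cosh(νs) ds`, and splitting
`cosh((ν+1)s) = cosh s cosh(νs) + sinh s sinh(νs)` and integrating the `sinh` term by parts gives
`K_{ν+1}(y) = (ν/y) K_ν(y) - K_ν'(y)`. Put `y = z cosh t`, multiply by `cosh^{N+1} t` and integrate
over `t`: differentiating `F_ν^N` under the integral sign produces exactly
`∫₀^∞ cosh^{N+1} t · K_ν'(z cosh t) dt`. Every interchange is dominated by `e^{ct - a cosh t}`,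
which is integrable on `(0, ∞)` for `a > 0`.
-/

open Real MeasureTheory

/-- `F_ν^N(z) = ∫_0^∞ cosh^N(t) K_ν(z cosh t) dt`. -/
noncomputable def F (N : ℕ) (ν : ℝ) (z : ℝ) : ℝ :=
  ∫ t in Set.Ioi (0 : ℝ), Real.cosh t ^ N * besselK ν (z * Real.cosh t)

open Set Filter

lemma one_add_sq_div_two_le_cosh (t : ℝ) : 1 + t ^ 2 / 2 ≤ cosh t := by
  have hsinh : (t / 2) ^ 2 ≤ sinh (t / 2) ^ 2 :=
    sq_le_sq.2 (by rw [abs_sinh]; exact self_le_sinh_iff.2 (abs_nonneg _))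
  have hcosh : cosh t = 1 + 2 * sinh (t / 2) ^ 2 := by
    rw [← mul_div_cancel₀ t two_ne_zero, cosh_two_mul, cosh_sq']
    ring_nf
  nlinarith

lemma cosh_le_exp_abs (t : ℝ) : cosh t ≤ exp |t| := by
  rw [cosh_eq]
  linarith [exp_le_exp.2 (le_abs_self t), exp_le_exp.2 (neg_le_abs t)]

lemma abs_sinh_le_exp_abs (t : ℝ) : |sinh t| ≤ exp |t| := by
  rw [abs_sinh]
  exact (sinh_lt_cosh _).le.trans (by rw [cosh_abs]; exact cosh_le_exp_abs t)

lemma integrableOn_exp_mul_sub_mul_cosh {a : ℝ} (ha : 0 < a) (c : ℝ) :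
    IntegrableOn (fun t => exp (c * t - a * cosh t)) (Ioi 0) := by
  -- completing the square in `c t - a (1 + t² / 2)` gives a Gaussian majorant
  have hgauss : Integrable (fun t : ℝ =>
      exp (-a + c ^ 2 / (2 * a)) * exp (-(a / 2) * (t - c / a) ^ 2)) :=
    ((integrable_exp_neg_mul_sq (half_pos ha)).comp_sub_right (c / a)).const_mul _
  refine hgauss.integrableOn.mono' (by fun_prop) (Eventually.of_forall fun t => ?_)
  rw [norm_of_nonneg (exp_pos _).le, ← exp_add]
  have hsq : (-a + c ^ 2 / (2 * a)) + -(a / 2) * (t - c / a) ^ 2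
      = c * t - a * (1 + t ^ 2 / 2) := by field_simp; ring
  rw [hsq, exp_le_exp]
  nlinarith [one_add_sq_div_two_le_cosh t]

lemma integrableOn_Ioi_of_abs_le_exp_mul_sub_mul_cosh {f : ℝ → ℝ} {a c C : ℝ} (ha : 0 < a)
    (hf : AEStronglyMeasurable f (volume.restrict (Ioi 0)))
    (hbound : ∀ t > 0, |f t| ≤ C * exp (c * t - a * cosh t)) :
    IntegrableOn f (Ioi 0) :=
  ((integrableOn_exp_mul_sub_mul_cosh ha c).const_mul C).mono' hf <|
    (ae_restrict_iff' measurableSet_Ioi).2 (Eventually.of_forall hbound)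

lemma abs_exp_neg_mul_cosh_mul_le {C c a x s v : ℝ} (hv : |v| ≤ C * exp (c * s))
    (hax : a ≤ x) : |exp (-x * cosh s) * v| ≤ C * exp (c * s - a * cosh s) := by
  rw [abs_mul, abs_of_pos (exp_pos _)]
  calc exp (-x * cosh s) * |v|
      ≤ exp (-a * cosh s) * (C * exp (c * s)) :=
        mul_le_mul (exp_le_exp.2 (by nlinarith [one_le_cosh s])) hv (abs_nonneg _) (exp_pos _).le
    _ = C * exp (c * s - a * cosh s) := by
        rw [sub_eq_neg_add, exp_add, neg_mul]
        ring

def HasExpGrowth (h : ℝ → ℝ) : Prop :=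
  ∃ C c : ℝ, ∀ s > 0, |h s| ≤ C * exp (c * s)

namespace HasExpGrowth

variable {h k : ℝ → ℝ}

lemma abs (hh : HasExpGrowth h) : HasExpGrowth fun s => |h s| := by
  simpa only [HasExpGrowth, abs_abs] using hh

lemma mul (hh : HasExpGrowth h) (hk : HasExpGrowth k) : HasExpGrowth fun s => h s * k s := by
  obtain ⟨C, c, hC⟩ := hh
  obtain ⟨D, d, hD⟩ := hk
  refine ⟨C * D, c + d, fun s hs => ?_⟩
  rw [abs_mul, add_mul, exp_add, mul_mul_mul_comm]
  exact mul_le_mul (hC s hs) (hD s hs) (abs_nonneg _) ((abs_nonneg _).trans (hC s hs))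

lemma const_mul (hh : HasExpGrowth h) (a : ℝ) : HasExpGrowth fun s => a * h s := by
  obtain ⟨C, c, hC⟩ := hh
  refine ⟨|a| * C, c, fun s hs => ?_⟩
  rw [abs_mul, mul_assoc]
  exact mul_le_mul_of_nonneg_left (hC s hs) (abs_nonneg a)

lemma integrableOn_exp_neg_mul_cosh_mul (hh : HasExpGrowth h) (hc : Continuous h) {a : ℝ}
    (ha : 0 < a) : IntegrableOn (fun s => exp (-a * cosh s) * h s) (Ioi 0) := by
  obtain ⟨C, c, hC⟩ := hh
  exact integrableOn_Ioi_of_abs_le_exp_mul_sub_mul_cosh ha (by fun_prop)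
    fun s hs => abs_exp_neg_mul_cosh_mul_le (hC s hs) le_rfl

end HasExpGrowth

lemma hasExpGrowth_cosh_mul (ν : ℝ) : HasExpGrowth fun s => cosh (ν * s) :=
  ⟨1, |ν|, fun s hs => by
    simpa [abs_of_pos (cosh_pos _), abs_mul, abs_of_pos hs] using cosh_le_exp_abs (ν * s)⟩

lemma hasExpGrowth_sinh_mul (ν : ℝ) : HasExpGrowth fun s => sinh (ν * s) :=
  ⟨1, |ν|, fun s hs => by
    simpa [abs_mul, abs_of_pos hs] using abs_sinh_le_exp_abs (ν * s)⟩

lemma hasExpGrowth_cosh : HasExpGrowth cosh := by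
  simpa using hasExpGrowth_cosh_mul 1

lemma hasExpGrowth_sinh : HasExpGrowth sinh := by
  simpa using hasExpGrowth_sinh_mul 1

-- `besselK ν` is `coshLaplace (fun s => cosh (ν * s))` by definition.
noncomputable def coshLaplace (h : ℝ → ℝ) (y : ℝ) : ℝ :=
  ∫ s in Ioi 0, exp (-y * cosh s) * h s

section coshLaplace

variable {h : ℝ → ℝ}

lemma hasDerivAt_coshLaplace (hc : Continuous h) (hh : HasExpGrowth h) {y : ℝ} (hy : 0 < y) :
    HasDerivAt (coshLaplace h) (-coshLaplace (fun s => cosh s * h s) y) y := by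
  obtain ⟨C, c, hC⟩ := hasExpGrowth_cosh.mul hh
  have hbound : ∀ s > 0, ∀ x ∈ Ioi (y / 2),
      ‖-(exp (-x * cosh s) * (cosh s * h s))‖ ≤ C * exp (c * s - y / 2 * cosh s) :=
    fun s hs x hx => by
      rw [norm_neg, Real.norm_eq_abs]
      exact abs_exp_neg_mul_cosh_mul_le (hC s hs) (mem_Ioi.1 hx).le
  have key := hasDerivAt_integral_of_dominated_loc_of_deriv_le
    (μ := volume.restrict (Ioi 0)) (F := fun x s => exp (-x * cosh s) * h s)
    (F' := fun x s => -(exp (-x * cosh s) * (cosh s * h s)))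
    (isOpen_Ioi.mem_nhds (half_lt_self hy)) (Eventually.of_forall fun _ => by fun_prop)
    (hh.integrableOn_exp_neg_mul_cosh_mul hc hy) (by fun_prop)
    ((ae_restrict_iff' measurableSet_Ioi).2 (Eventually.of_forall hbound))
    ((integrableOn_exp_mul_sub_mul_cosh (half_pos hy) c).const_mul C)
    (Eventually.of_forall fun s x _ =>
      (((hasDerivAt_neg x).mul_const (cosh s)).exp.mul_const (h s)).congr_deriv (by ring))
  show HasDerivAt (fun x => ∫ s in Ioi 0, exp (-x * cosh s) * h s)
    (-∫ s in Ioi 0, exp (-y * cosh s) * (cosh s * h s)) y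
  rw [← integral_neg]
  exact key.2

lemma continuousOn_coshLaplace (hc : Continuous h) (hh : HasExpGrowth h) :
    ContinuousOn (coshLaplace h) (Ioi 0) :=
  fun _ hy => (hasDerivAt_coshLaplace hc hh hy).continuousAt.continuousWithinAt

lemma abs_coshLaplace_le (hc : Continuous h) (hh : HasExpGrowth h) {y₀ y : ℝ} (hy₀ : 0 < y₀)
    (hle : y₀ ≤ y) :
    |coshLaplace h y| ≤ exp (y₀ - y) * coshLaplace (fun s => |h s|) y₀ := by
  rw [coshLaplace, coshLaplace, ← integral_const_mul]
  refine (abs_integral_le_integral_abs).trans (setIntegral_mono_on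
    (hh.integrableOn_exp_neg_mul_cosh_mul hc (hy₀.trans_le hle)).abs
    ((hh.abs.integrableOn_exp_neg_mul_cosh_mul hc.abs hy₀).const_mul _) measurableSet_Ioi
    fun s _ => ?_)
  rw [abs_mul, abs_of_pos (exp_pos _), ← mul_assoc, ← exp_add]
  refine mul_le_mul_of_nonneg_right (exp_le_exp.2 ?_) (abs_nonneg _)
  nlinarith [one_le_cosh s]

end coshLaplace

lemma mul_coshLaplace_sinh_mul {u u' : ℝ → ℝ} (hu0 : u 0 = 0) (hu : ∀ s, HasDerivAt u (u' s) s)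
    (hu'c : Continuous u') (hgu : HasExpGrowth u) (hgu' : HasExpGrowth u') {y : ℝ} (hy : 0 < y) :
    y * coshLaplace (fun s => sinh s * u s) y = coshLaplace u' y := by
  have huc : Continuous u := continuous_iff_continuousAt.2 fun s => (hu s).continuousAt
  have hderiv : ∀ s, HasDerivAt (fun s => exp (-y * cosh s) * u s)
      (exp (-y * cosh s) * u' s - y * (exp (-y * cosh s) * (sinh s * u s))) s :=
    fun s => (((hasDerivAt_cosh s).const_mul (-y)).exp.mul (hu s)).congr_deriv (by ring)
  have hint₁ := hgu'.integrableOn_exp_neg_mul_cosh_mul hu'c hy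
  have hint₂ := (hasExpGrowth_sinh.mul hgu).integrableOn_exp_neg_mul_cosh_mul (by fun_prop) hy
  have hint := hint₁.sub (hint₂.const_mul y)
  -- the boundary term at `∞` vanishes because `e^{-y cosh s} u s` and its derivative are integrable
  have hFTC := integral_Ioi_of_hasDerivAt_of_tendsto' (fun s _ => hderiv s) hint
    (tendsto_zero_of_hasDerivAt_of_integrableOn_Ioi (fun s _ => hderiv s) hint
      (hgu.integrableOn_exp_neg_mul_cosh_mul huc hy))
  rw [integral_sub hint₁ (hint₂.const_mul y), integral_const_mul, hu0, mul_zero, sub_zero]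
    at hFTC
  rw [coshLaplace, coshLaplace]
  linarith

lemma besselK_add_one (ν : ℝ) {y : ℝ} (hy : 0 < y) :
    besselK (ν + 1) y = ν / y * besselK ν y + coshLaplace (fun s => cosh s * cosh (ν * s)) y := by
  have hsplit : besselK (ν + 1) y = coshLaplace (fun s => cosh s * cosh (ν * s)) y
      + coshLaplace (fun s => sinh s * sinh (ν * s)) y := by
    rw [besselK, coshLaplace, coshLaplace, ← integral_add
      ((hasExpGrowth_cosh.mul (hasExpGrowth_cosh_mul ν)).integrableOn_exp_neg_mul_cosh_mul
        (by fun_prop) hy)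
      ((hasExpGrowth_sinh.mul (hasExpGrowth_sinh_mul ν)).integrableOn_exp_neg_mul_cosh_mul
        (by fun_prop) hy)]
    refine setIntegral_congr_fun measurableSet_Ioi fun s _ => ?_
    rw [add_one_mul, add_comm, cosh_add]
    ring
  have hibp : y * coshLaplace (fun s => sinh s * sinh (ν * s)) y = ν * besselK ν y := by
    rw [mul_coshLaplace_sinh_mul (by simp)
      (fun s => ((hasDerivAt_id' s).const_mul ν).sinh.congr_deriv (by simp [mul_comm]))
      (by fun_prop) (hasExpGrowth_sinh_mul ν) ((hasExpGrowth_cosh_mul ν).const_mul ν) hy,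
      coshLaplace, besselK, ← integral_const_mul]
    exact integral_congr_ae (Eventually.of_forall fun s => mul_left_comm _ _ _)
  have hsinh : coshLaplace (fun s => sinh s * sinh (ν * s)) y = ν / y * besselK ν y := by
    rw [div_mul_eq_mul_div, eq_div_iff hy.ne', mul_comm, hibp]
  rw [hsplit, hsinh, add_comm]

def HasExpDecay (g : ℝ → ℝ) : Prop :=
  ∀ y₀ > 0, ∃ A : ℝ, ∀ x ≥ y₀, |g x| ≤ A * exp (-x)

lemma HasExpDecay.neg {g : ℝ → ℝ} (hg : HasExpDecay g) : HasExpDecay fun x => -g x := by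
  simpa only [HasExpDecay, abs_neg] using hg

lemma HasExpGrowth.hasExpDecay_coshLaplace {h : ℝ → ℝ} (hh : HasExpGrowth h) (hc : Continuous h) :
    HasExpDecay (coshLaplace h) := fun y₀ hy₀ =>
  ⟨exp y₀ * coshLaplace (fun s => |h s|) y₀, fun x hx => by
    rw [mul_right_comm, ← exp_add, ← sub_eq_add_neg]
    exact abs_coshLaplace_le hc hh hy₀ hx⟩

section coshMoment

variable {g g' : ℝ → ℝ}

lemma abs_cosh_pow_mul_comp_le {A y₀ x t : ℝ} (hA : ∀ x ≥ y₀, |g x| ≤ A * exp (-x))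
    (hy₀ : 0 < y₀) (hx : y₀ ≤ x) (ht : 0 ≤ t) (N : ℕ) :
    |cosh t ^ N * g (x * cosh t)| ≤ A * exp (N * t - y₀ * cosh t) := by
  have hA₀ : 0 ≤ A :=
    (mul_nonneg_iff_of_pos_right (exp_pos _)).1 ((abs_nonneg _).trans (hA y₀ le_rfl))
  have hxt : y₀ ≤ x * cosh t := by nlinarith [one_le_cosh t]
  have hpow : cosh t ^ N ≤ exp (N * t) := by
    rw [exp_nat_mul]
    exact pow_le_pow_left₀ (cosh_pos t).le
      (by simpa [abs_of_nonneg ht] using cosh_le_exp_abs t) N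
  rw [abs_mul, abs_of_pos (pow_pos (cosh_pos t) N), sub_eq_add_neg, exp_add, mul_left_comm]
  refine mul_le_mul hpow ((hA _ hxt).trans ?_) (abs_nonneg _) (exp_pos _).le
  gcongr

lemma continuous_cosh_pow_mul_comp (N : ℕ) (hg : ContinuousOn g (Ioi 0)) {z : ℝ} (hz : 0 < z) :
    Continuous fun t => cosh t ^ N * g (z * cosh t) :=
  (continuous_cosh.pow N).mul
    (hg.comp_continuous (by fun_prop) fun t => mul_pos hz (cosh_pos t))

lemma integrableOn_cosh_pow_mul_comp (N : ℕ) (hg : ContinuousOn g (Ioi 0)) (hd : HasExpDecay g)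
    {z : ℝ} (hz : 0 < z) : IntegrableOn (fun t => cosh t ^ N * g (z * cosh t)) (Ioi 0) := by
  obtain ⟨A, hA⟩ := hd z hz
  exact integrableOn_Ioi_of_abs_le_exp_mul_sub_mul_cosh hz
    (continuous_cosh_pow_mul_comp N hg hz).aestronglyMeasurable
    fun t ht => abs_cosh_pow_mul_comp_le hA hz le_rfl ht.le N

lemma hasDerivAt_integral_cosh_pow_mul_comp (N : ℕ) (hg : ∀ x > 0, HasDerivAt g (g' x) x)
    (hg' : ContinuousOn g' (Ioi 0)) (hdg : HasExpDecay g) (hdg' : HasExpDecay g') {z : ℝ}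
    (hz : 0 < z) :
    HasDerivAt (fun x => ∫ t in Ioi 0, cosh t ^ N * g (x * cosh t))
      (∫ t in Ioi 0, cosh t ^ (N + 1) * g' (z * cosh t)) z := by
  have hgc : ContinuousOn g (Ioi 0) := fun x hx => (hg x hx).continuousAt.continuousWithinAt
  obtain ⟨A, hA⟩ := hdg' (z / 2) (half_pos hz)
  have hbound : ∀ t > 0, ∀ x ∈ Ioi (z / 2),
      ‖cosh t ^ (N + 1) * g' (x * cosh t)‖ ≤ A * exp ((N + 1 : ℕ) * t - z / 2 * cosh t) :=
    fun t ht x hx => abs_cosh_pow_mul_comp_le hA (half_pos hz) (le_of_lt hx) ht.le (N + 1)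
  have key := hasDerivAt_integral_of_dominated_loc_of_deriv_le
    (μ := volume.restrict (Ioi 0)) (F := fun x t => cosh t ^ N * g (x * cosh t))
    (F' := fun x t => cosh t ^ (N + 1) * g' (x * cosh t))
    (isOpen_Ioi.mem_nhds (half_lt_self hz))
    ((lt_mem_nhds hz).mono fun x hx =>
      (continuous_cosh_pow_mul_comp N hgc hx).aestronglyMeasurable)
    (integrableOn_cosh_pow_mul_comp N hgc hdg hz)
    (continuous_cosh_pow_mul_comp (N + 1) hg' hz).aestronglyMeasurable
    ((ae_restrict_iff' measurableSet_Ioi).2 (Eventually.of_forall hbound))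
    ((integrableOn_exp_mul_sub_mul_cosh (half_pos hz) _).const_mul A)
    (Eventually.of_forall fun t x hx =>
      (((hg _ (mul_pos ((half_pos hz).trans hx) (cosh_pos t))).comp x
        (hasDerivAt_mul_const (cosh t))).const_mul _).congr_deriv (by ring))
  exact key.2

end coshMoment

theorem F_recursion_two (N : ℕ) (ν : ℝ) (z : ℝ) (hz : 0 < z) :
    F (N + 1) (ν + 1) z = ν / z * F N ν z - derivWithin (F N ν) (Set.Ioi 0) z := by
  have hKgrowth := hasExpGrowth_cosh_mul ν
  have hK'growth := hasExpGrowth_cosh.mul hKgrowth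
  set K' : ℝ → ℝ := fun y => -coshLaplace (fun s => cosh s * cosh (ν * s)) y
  have hK : ∀ y > 0, HasDerivAt (besselK ν) (K' y) y := fun y hy =>
    hasDerivAt_coshLaplace (by fun_prop) hKgrowth hy
  have hKc : ContinuousOn (besselK ν) (Ioi 0) := continuousOn_coshLaplace (by fun_prop) hKgrowth
  have hK'c : ContinuousOn K' (Ioi 0) := (continuousOn_coshLaplace (by fun_prop) hK'growth).neg
  have hKd : HasExpDecay (besselK ν) := hKgrowth.hasExpDecay_coshLaplace (by fun_prop)
  have hK'd : HasExpDecay K' := (hK'growth.hasExpDecay_coshLaplace (by fun_prop)).neg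
  have hF : HasDerivAt (F N ν) (∫ t in Ioi 0, cosh t ^ (N + 1) * K' (z * cosh t)) z :=
    hasDerivAt_integral_cosh_pow_mul_comp N hK hK'c hKd hK'd hz
  rw [hF.hasDerivWithinAt.derivWithin (isOpen_Ioi.uniqueDiffWithinAt hz), F, F,
    ← integral_const_mul, ← integral_sub
      ((integrableOn_cosh_pow_mul_comp N hKc hKd hz).const_mul _)
      (integrableOn_cosh_pow_mul_comp (N + 1) hK'c hK'd hz)]
  refine setIntegral_congr_fun measurableSet_Ioi fun t _ => ?_
  have hzt : 0 < z * cosh t := mul_pos hz (cosh_pos t)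
  rw [besselK_add_one ν hzt]
  field_simp
  ring
end
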